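/- arXiv:0804.4268 — 3 statements merged into one kernel-verified Lean document; each statement's English description precedes it below -/
import Mathlib

section
/- For each positive integer n, the sum over all binary trees T with n vertices of the product over all vertices v of T of (1 + 1/h_v) equals 2^n * (n+1)^(n-1) / n!, where h_v is the hook length of v (the number of descendants of v, including v itself). -/
/-!
Deleting the root splits a binary tree with `n + 1` vertices into two subtrees of sizes
`i + j = n`, and the root has hook length `n + 1`. Hence the sums `S n` of the hook weights
`∏ (1 + 1 / h_v)` satisfy `S (n + 1) = (1 + 1 / (n + 1)) ∑_{i + j = n} S i * S j`.
The claimed values are `S n = 2 ^ n a_n(1) / n!` with the Abel polynomials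
`a_n(x) = x (x + n) ^ (n - 1)`, so the recurrence becomes Abel's identity
`∑_{i + j = n} (n choose i) a_i(1) a_j(1) = a_n(2)` together with `(n + 2) a_n(2) = 2 (n + 2) ^ n`.
-/

/-- A binary tree: `nil` is the empty tree, `node l r` is a vertex with
(possibly empty) left subtree `l` and right subtree `r`. -/
inductive BinTree where
  | nil : BinTree
  | node : BinTree → BinTree → BinTree

/-- Number of vertices of a binary tree. -/
def BinTree.size : BinTree → ℕ
  | .nil => 0
  | .node l r => l.size + r.size + 1

/-- The multiset of hook lengths of the vertices of a binary tree
(the hook length of a vertex is the number of vertices of the subtree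
rooted at it, including itself). -/
def BinTree.hooks : BinTree → Multiset ℕ
  | .nil => 0
  | .node l r => (BinTree.node l r).size ::ₘ (l.hooks + r.hooks)

open Finset

section Abel

open Polynomial

variable {R : Type*} [CommRing R]

/-- The Abel polynomials `X (X + k) ^ (k - 1)`, i.e. Abel's `X (X - a k) ^ (k - 1)` at `a = -1`. -/
noncomputable def abelPoly : ℕ → R[X]
  | 0 => 1
  | k + 1 => X * (X + (k + 1 : R[X])) ^ k

@[simp]
theorem abelPoly_zero : (abelPoly 0 : R[X]) = 1 := rfl

theorem abelPoly_eval_zero {k : ℕ} (hk : k ≠ 0) : (abelPoly k).eval (0 : R) = 0 := by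
  obtain ⟨k, rfl⟩ := Nat.exists_eq_succ_of_ne_zero hk
  simp [abelPoly]

theorem abelPoly_eval_one (k : ℕ) : (abelPoly k).eval (1 : R) = (k + 1) ^ (k - 1) := by
  rcases k with _ | k
  · simp [abelPoly]
  · simp [abelPoly]; ring

theorem add_mul_abelPoly_eval (x : R) (k : ℕ) :
    (x + k) * (abelPoly k).eval x = x * (x + k) ^ k := by
  rcases k with _ | k
  · simp [abelPoly]
  · simp [abelPoly]; ring

theorem derivative_abelPoly_succ (k : ℕ) :
    derivative (abelPoly (k + 1) : R[X]) = (k + 1 : R[X]) * (abelPoly k).comp (X + 1) := by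
  rcases k with _ | k
  · simp [abelPoly]
  · simp [abelPoly, derivative_pow]
    ring

variable [IsAddTorsionFree R]

theorem eq_of_derivative_eq_of_eval_zero_eq {p q : R[X]}
    (hd : derivative p = derivative q) (h0 : p.eval 0 = q.eval 0) : p = q := by
  have hC := eq_C_of_derivative_eq_zero (p := p - q) (by rw [derivative_sub, hd, sub_self])
  rw [← sub_eq_zero, hC, coeff_zero_eq_eval_zero, eval_sub, h0, sub_self, C_0]

/-- Abel's identity. Both sides agree at `0`, and by `derivative_abelPoly_succ` differentiating
turns the identity for `n + 1` into `n + 1` times the one for `n` composed with `X + 1`. -/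
theorem abelPoly_comp_X_add_C (n : ℕ) (y : R) :
    (abelPoly n).comp (X + C y) =
      ∑ p ∈ antidiagonal n, (n.choose p.1 : R[X]) * abelPoly p.1 * C ((abelPoly p.2).eval y) := by
  induction n with
  | zero => simp
  | succ n ih =>
    refine eq_of_derivative_eq_of_eval_zero_eq ?_ ?_
    · have hterm (p : ℕ × ℕ) :
          derivative (((n + 1).choose (p.1 + 1) : R[X]) * abelPoly (p.1 + 1) *
            C ((abelPoly p.2).eval y)) = (n + 1 : R[X]) *
              ((n.choose p.1 : R[X]) * abelPoly p.1 * C ((abelPoly p.2).eval y)).comp (X + 1) := by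
        have hchoose : ((n + 1).choose (p.1 + 1) * (p.1 + 1) : R[X]) = (n + 1) * n.choose p.1 := by
          have := congrArg (Nat.cast : ℕ → R[X]) (Nat.add_one_mul_choose_eq n p.1)
          push_cast at this
          exact this.symm
        simp only [derivative_mul, derivative_natCast, derivative_C, derivative_abelPoly_succ,
          mul_comp, natCast_comp, C_comp]
        linear_combination (abelPoly p.1).comp (X + 1) * C ((abelPoly p.2).eval y) * hchoose
      rw [Nat.sum_antidiagonal_succ, derivative_add, derivative_sum]
      simp only [hterm, ← mul_sum, ← Polynomial.sum_comp, ← ih]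
      rw [derivative_comp, derivative_abelPoly_succ, mul_comp, comp_assoc, comp_assoc]
      simp [add_right_comm]
    · simp [Nat.sum_antidiagonal_succ, eval_finsetSum, abelPoly_eval_zero]

theorem abelPoly_eval_add (x y : R) (n : ℕ) :
    (abelPoly n).eval (x + y) =
      ∑ p ∈ antidiagonal n, n.choose p.1 * (abelPoly p.1).eval x * (abelPoly p.2).eval y := by
  simpa [eval_finsetSum] using congrArg (eval x) (abelPoly_comp_X_add_C n y)

end Abel

namespace BinTree

theorem size_eq_zero {T : BinTree} : T.size = 0 ↔ T = nil := by
  cases T <;> simp [size]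

def sizeSuccEquiv (n : ℕ) :
    {T : BinTree // T.size = n + 1} ≃
      Σ p : antidiagonal n, {l : BinTree // l.size = p.1.1} × {r : BinTree // r.size = p.1.2} where
  toFun
    | ⟨node l r, h⟩ => ⟨⟨(l.size, r.size), by simpa [size] using h⟩, ⟨l, rfl⟩, ⟨r, rfl⟩⟩
  invFun q := ⟨node q.2.1 q.2.2, by rw [size, q.2.1.2, q.2.2.2, mem_antidiagonal.1 q.1.2]⟩
  left_inv
    | ⟨node _ _, _⟩ => rfl
  right_inv
    | ⟨⟨(_, _), _⟩, ⟨_, rfl⟩, ⟨_, rfl⟩⟩ => rfl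

instance (n : ℕ) : Finite {T : BinTree // T.size = n} := by
  induction n using Nat.strong_induction_on with
  | _ n ih =>
    rcases n with _ | n
    · have : Subsingleton {T : BinTree // T.size = 0} :=
        ⟨fun T T' => Subtype.ext <| (size_eq_zero.1 T.2).trans (size_eq_zero.1 T'.2).symm⟩
      infer_instance
    · have (p : antidiagonal n) :
          Finite ({l : BinTree // l.size = p.1.1} × {r : BinTree // r.size = p.1.2}) := by
        have := mem_antidiagonal.1 p.2
        have := ih p.1.1 (by omega)
        have := ih p.1.2 (by omega)
        infer_instance
      exact Finite.of_equiv _ (sizeSuccEquiv n).symm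

noncomputable instance (n : ℕ) : Fintype {T : BinTree // T.size = n} := Fintype.ofFinite _

section HookSum

variable {R : Type*} [CommSemiring R] (φ : ℕ → R)

noncomputable def hookSum (n : ℕ) : R :=
  ∑ T : {T : BinTree // T.size = n}, (T.1.hooks.map φ).prod

theorem prod_map_hooks_node (l r : BinTree) :
    ((node l r).hooks.map φ).prod =
      φ (l.size + r.size + 1) * ((l.hooks.map φ).prod * (r.hooks.map φ).prod) := by
  simp [hooks, size]

theorem hookSum_zero : hookSum φ 0 = 1 := by
  let _ : Unique {T : BinTree // T.size = 0} :=
    ⟨⟨⟨nil, rfl⟩⟩, fun T => Subtype.ext (size_eq_zero.1 T.2)⟩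
  rw [hookSum, Fintype.sum_unique]
  exact Multiset.prod_zero (M := R)

theorem hookSum_succ (n : ℕ) :
    hookSum φ (n + 1) = φ (n + 1) * ∑ p ∈ antidiagonal n, hookSum φ p.1 * hookSum φ p.2 := by
  rw [hookSum, ← (sizeSuccEquiv n).symm.sum_comp, Fintype.sum_sigma, mul_sum,
    ← sum_coe_sort (antidiagonal n)]
  refine Fintype.sum_congr _ _ fun p => ?_
  rw [hookSum, hookSum, sum_mul_sum, ← Finset.univ_product_univ, sum_product, mul_sum]
  refine Fintype.sum_congr _ _ fun l => ?_
  rw [mul_sum]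
  refine Fintype.sum_congr _ _ fun r => ?_
  simp [sizeSuccEquiv, prod_map_hooks_node, l.2, r.2, mem_antidiagonal.1 p.2]

end HookSum

open scoped Nat in
theorem hookSum_one_add_inv (n : ℕ) :
    hookSum (fun h => (1 : ℝ) + 1 / h) n = 2 ^ n * ((n : ℝ) + 1) ^ (n - 1) / n ! := by
  induction n using Nat.strong_induction_on with
  | _ n ih =>
    rcases n with _ | n
    · simp [hookSum_zero]
    have hterm : ∀ p ∈ antidiagonal n,
        hookSum (fun h => (1 : ℝ) + 1 / h) p.1 * hookSum (fun h => (1 : ℝ) + 1 / h) p.2 =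
          2 ^ n / n ! * (n.choose p.1 * (abelPoly p.1).eval 1 * (abelPoly p.2).eval 1) := by
      rintro ⟨i, j⟩ hij
      obtain rfl : i + j = n := mem_antidiagonal.1 hij
      rw [ih i (by omega), ih j (by omega), abelPoly_eval_one, abelPoly_eval_one,
        Nat.cast_add_choose]
      field_simp
      ring
    rw [hookSum_succ, sum_congr rfl hterm, ← mul_sum, ← abelPoly_eval_add, one_add_one_eq_two]
    have habel := add_mul_abelPoly_eval (2 : ℝ) n
    rw [Nat.factorial_succ, Nat.add_sub_cancel]
    push_cast
    field_simp
    linear_combination 2 ^ n * habel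

end BinTree

theorem postnikov_hook_length_general (n : ℕ) :
    ∑' T : {T : BinTree // T.size = n},
      ((T.1.hooks).map (fun h => (1 : ℝ) + 1 / h)).prod
      = 2 ^ n * ((n : ℝ) + 1) ^ (n - 1) / (Nat.factorial n : ℝ) := by
  rw [tsum_fintype]
  -- `hooks` is coerced to `Multiset ℝ` here, through the monad structure of `Multiset`.
  simp only [Multiset.pure_def, Multiset.bind_def, Multiset.bind_singleton, Multiset.map_map,
    Function.comp_def]
  exact BinTree.hookSum_one_add_inv n

/-- Postnikov's hook length formula for binary trees. -/
theorem postnikov_hook_length (n : ℕ) (hn : 1 ≤ n) :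
    ∑' T : {T : BinTree // T.size = n},
      ((T.1.hooks).map (fun h => (1 : ℝ) + 1 / h)).prod
      = 2 ^ n * ((n : ℝ) + 1) ^ (n - 1) / (Nat.factorial n : ℝ) :=
  postnikov_hook_length_general n
end

section
/- For every positive integer n and any variable z, 2z(n+2z)^(n-1)/n! = sum_{k=0}^{n} (z(k+z)^(k-1)/k!) * (z(n-k+z)^(n-k-1)/(n-k)!), as an identity of polynomials in z (after clearing the factors z^(-1) appearing when k = 0 or k = n). -/
open Finset

noncomputable def abelA : ℕ → ℝ → ℝ
  | 0, _ => 1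
  | (n+1), x => x * (x + (n : ℝ) + 1) ^ n

lemma abelA_zero (x : ℝ) : abelA 0 x = 1 := rfl

lemma abelA_succ (n : ℕ) (x : ℝ) : abelA (n+1) x = x * (x + (n : ℝ) + 1) ^ n := rfl

lemma abelA_at_zero (k : ℕ) (hk : 1 ≤ k) : abelA k 0 = 0 := by
  cases k with
  | zero => omega
  | succ m => simp [abelA_succ]

lemma hasDerivAt_abelA (n : ℕ) (x : ℝ) :
    HasDerivAt (abelA n) ((n : ℝ) * abelA (n - 1) (x + 1)) x := by
  cases n with
  | zero =>
    rw [show abelA 0 = fun _ => (1:ℝ) from funext abelA_zero]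
    simpa using (hasDerivAt_const x (1 : ℝ))
  | succ m =>
    have hb : HasDerivAt (fun y : ℝ => (y + (m:ℝ) + 1) ^ m)
        ((m:ℝ) * (x + (m:ℝ) + 1) ^ (m-1) * 1) x :=
      (((hasDerivAt_id x).add_const (m:ℝ)).add_const 1).pow m
    have h := (hasDerivAt_id x).mul hb
    have h' : HasDerivAt (abelA (m+1))
        (1 * (x + (m:ℝ) + 1) ^ m + x * ((m:ℝ) * (x + (m:ℝ) + 1) ^ (m-1) * 1)) x := h
    convert h' using 1
    cases m with
    | zero => simp [abelA_zero]
    | succ l =>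
      simp only [Nat.add_sub_cancel]
      rw [abelA_succ]
      simp only [pow_succ]
      push_cast
      ring

lemma abelA_binomial (n : ℕ) (x y : ℝ) :
    ∑ k ∈ range (n + 1), (n.choose k : ℝ) * abelA k x * abelA (n - k) y
      = abelA n (x + y) := by
  induction n generalizing x with
  | zero => simp [abelA_zero]
  | succ n ih =>
    set f : ℝ → ℝ := fun x =>
      ∑ k ∈ range (n + 2), ((n+1).choose k : ℝ) * abelA k x * abelA (n + 1 - k) y
        - abelA (n+1) (x + y) with hf
    have hderiv : ∀ t : ℝ, HasDerivAt f 0 t := by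
      intro t
      have h1 : HasDerivAt
          (fun x => ∑ k ∈ range (n + 2),
            ((n+1).choose k : ℝ) * abelA k x * abelA (n + 1 - k) y)
          (∑ k ∈ range (n + 2),
            ((n+1).choose k : ℝ) * ((k : ℝ) * abelA (k-1) (t+1)) * abelA (n + 1 - k) y) t := by
        apply HasDerivAt.fun_sum
        intro k _
        exact ((hasDerivAt_abelA k t).const_mul _).mul_const _
      have h2 : HasDerivAt (fun x => abelA (n+1) (x + y))
          ((((n+1):ℕ):ℝ) * abelA n (t + y + 1)) t := by
        have h3 := (hasDerivAt_abelA (n+1) (t+y)).comp t ((hasDerivAt_id t).add_const y)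
        simpa [Function.comp_def] using h3
      have hmain : ∀ j ∈ range (n+1),
          (((n+1).choose (j+1) : ℕ) : ℝ) * ((((j+1):ℕ):ℝ) * abelA (j+1-1) (t+1)) * abelA (n+1-(j+1)) y
          = (((n+1):ℕ):ℝ) * ((n.choose j : ℝ) * abelA j (t+1) * abelA (n-j) y) := by
        intro j _
        have hc : ((n+1).choose (j+1)) * (j+1) = (n+1) * n.choose j := by
          rw [← Nat.add_one_mul_choose_eq]
        have hc' : (((n+1).choose (j+1) : ℕ) : ℝ) * (((j+1):ℕ):ℝ)
            = (((n+1):ℕ):ℝ) * (n.choose j : ℝ) := by exact_mod_cast hc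
        simp only [Nat.add_sub_cancel, Nat.succ_sub_succ]
        calc (((n+1).choose (j+1) : ℕ) : ℝ) * ((((j+1):ℕ):ℝ) * abelA j (t+1)) * abelA (n-j) y
            = ((((n+1).choose (j+1) : ℕ) : ℝ) * (((j+1):ℕ):ℝ)) * abelA j (t+1) * abelA (n-j) y := by
              ring
          _ = _ := by rw [hc']; ring
      have hsum : ∑ k ∈ range (n + 2),
            ((n+1).choose k : ℝ) * ((k : ℝ) * abelA (k-1) (t+1)) * abelA (n + 1 - k) y
          = (((n+1):ℕ):ℝ) * abelA n (t + y + 1) := by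
        rw [Finset.sum_range_succ']
        rw [Finset.sum_congr rfl hmain, ← Finset.mul_sum, ih (t+1)]
        have hxy : t + 1 + y = t + y + 1 := by ring
        rw [hxy]
        norm_num
      have h4 := h1.sub h2
      rw [hsum, sub_self] at h4
      exact h4
    have hdiff : Differentiable ℝ f := fun t => (hderiv t).differentiableAt
    have hd0 : ∀ t, deriv f t = 0 := fun t => (hderiv t).deriv
    have hconst := is_const_of_deriv_eq_zero hdiff hd0 x 0
    have hf0 : f 0 = 0 := by
      have h5 : ∑ k ∈ range (n + 2),
          ((n+1).choose k : ℝ) * abelA k 0 * abelA (n + 1 - k) y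
          = abelA (n+1) y := by
        rw [Finset.sum_eq_single 0]
        · simp [abelA_zero]
        · intro k _ hk
          rw [abelA_at_zero k (Nat.one_le_iff_ne_zero.mpr hk)]
          ring
        · simp
      simp [hf, h5]
    have h6 : f x = 0 := hconst.trans hf0
    simpa [hf, sub_eq_zero] using h6

lemma abelA_eq (k : ℕ) (hk : 1 ≤ k) (z : ℝ) :
    abelA k z = z * ((k : ℝ) + z) ^ (k - 1) := by
  cases k with
  | zero => omega
  | succ m =>
    rw [abelA_succ]
    simp only [Nat.add_sub_cancel]
    push_cast
    ring_nf

/-- Lemma 3 of Han's paper: an Abel-type convolution identity,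
`2z(n+2z)^(n-1)/n! = sum_{k=0}^{n} (z(k+z)^(k-1)/k!)(z(n-k+z)^(n-k-1)/(n-k)!)`,
where the boundary terms `k = 0` and `k = n` are each interpreted as
`z(n+z)^(n-1)/n!`.  Stated for all real `z`, which is equivalent to the
polynomial identity in `z`. -/
theorem abel_convolution (n : ℕ) (hn : 1 ≤ n) (z : ℝ) :
    2 * z * ((n : ℝ) + 2 * z) ^ (n - 1) / (Nat.factorial n : ℝ)
      = 2 * (z * ((n : ℝ) + z) ^ (n - 1) / (Nat.factorial n : ℝ))
        + ∑ k ∈ Finset.Ico 1 n,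
            (z * ((k : ℝ) + z) ^ (k - 1) / (Nat.factorial k : ℝ)) *
            (z * (((n - k : ℕ) : ℝ) + z) ^ (n - k - 1) /
              (Nat.factorial (n - k) : ℝ)) := by
  have key := abelA_binomial n z z
  have hL : abelA n (z + z) = 2 * z * ((n : ℝ) + 2 * z) ^ (n - 1) := by
    rw [abelA_eq n hn (z + z)]
    have h7 : (n : ℝ) + (z + z) = (n : ℝ) + 2 * z := by ring
    rw [h7]; ring
  have hfac : (0:ℝ) < (Nat.factorial n : ℝ) := by
    exact_mod_cast Nat.factorial_pos n
  have hsplit : ∑ k ∈ range (n + 1), (n.choose k : ℝ) * abelA k z * abelA (n - k) z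
      = 2 * abelA n z +
        ∑ k ∈ Finset.Ico 1 n, (n.choose k : ℝ) * abelA k z * abelA (n - k) z := by
    have h1 : range (n + 1) = insert 0 (insert n (Finset.Ico 1 n)) := by
      ext k
      simp only [Finset.mem_range, Finset.mem_insert, Finset.mem_Ico]
      omega
    rw [h1, Finset.sum_insert, Finset.sum_insert]
    · simp only [Nat.choose_zero_right, Nat.choose_self, Nat.sub_self, abelA_zero,
        Nat.cast_one, Nat.sub_zero]
      ring
    · simp
    · simp only [Finset.mem_insert, Finset.mem_Ico]
      omega
  rw [hsplit] at key
  have step : ∀ k ∈ Finset.Ico 1 n,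
      (n.choose k : ℝ) * abelA k z * abelA (n - k) z / (Nat.factorial n : ℝ)
      = (z * ((k : ℝ) + z) ^ (k - 1) / (Nat.factorial k : ℝ)) *
        (z * (((n - k : ℕ) : ℝ) + z) ^ (n - k - 1) / (Nat.factorial (n - k) : ℝ)) := by
    intro k hk
    rw [Finset.mem_Ico] at hk
    have hkle : k ≤ n := le_of_lt hk.2
    have hnk : 1 ≤ n - k := by omega
    rw [abelA_eq k hk.1 z, abelA_eq (n - k) hnk z]
    have hcf : (Nat.choose n k : ℝ) * (Nat.factorial k : ℝ) * (Nat.factorial (n - k) : ℝ)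
        = (Nat.factorial n : ℝ) := by
      exact_mod_cast Nat.choose_mul_factorial_mul_factorial hkle
    have hk0 : (Nat.factorial k : ℝ) ≠ 0 := by positivity
    have hnk0 : (Nat.factorial (n - k) : ℝ) ≠ 0 := by positivity
    have hn0 : (Nat.factorial n : ℝ) ≠ 0 := ne_of_gt hfac
    field_simp
    rw [← hcf]
    ring
  have hAn : abelA n z = z * ((n : ℝ) + z) ^ (n - 1) := abelA_eq n hn z
  calc 2 * z * ((n : ℝ) + 2 * z) ^ (n - 1) / (Nat.factorial n : ℝ)
      = abelA n (z + z) / (Nat.factorial n : ℝ) := by rw [hL]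
    _ = (2 * abelA n z +
          ∑ k ∈ Finset.Ico 1 n, (n.choose k : ℝ) * abelA k z * abelA (n - k) z) /
          (Nat.factorial n : ℝ) := by rw [← key]
    _ = 2 * (abelA n z / (Nat.factorial n : ℝ)) +
          ∑ k ∈ Finset.Ico 1 n,
            (n.choose k : ℝ) * abelA k z * abelA (n - k) z / (Nat.factorial n : ℝ) := by
        rw [add_div, Finset.sum_div, mul_div_assoc]
    _ = _ := by
        rw [hAn, Finset.sum_congr rfl step]
end

section
/- For each positive integer n, the sum over all 3-ary (ternary) trees T with n internal vertices of the product over all internal vertices v of T of (2/3 + 1/(3 h_v)) equals (2n+1)^(n-1)/n!, where h_v is the number of internal vertices in the subtree rooted at v. -/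
/-!
Grouping the trees with `n + 1` internal vertices by the three subtrees of the root, whose hook
lengths are unchanged, the sums `F n` of the hook products satisfy
`F (n + 1) = (2/3 + 1/(3(n+1))) * ∑_{i+j+k=n} F i * F j * F k` with `F 0 = 1`.
The numbers `a_n(x) = x (x + 2n)^(n-1) / n!` obey Abel's identity
`∑_{i+j=n} a_i(x) a_j(y) = a_n(x + y)`, which follows by differentiating in `x` because
`a_{n+1}' (x) = a_n (x + 2)` and `a_{n+1}(0) = 0`. Hence the triple convolution of `a(1)` is
`a_n(3)`, and `(2/3 + 1/(3(n+1))) a_n(3) = a_{n+1}(1)`, so `F n = a_n(1) = (2n+1)^(n-1)/n!`.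
-/

/-- A ternary (3-ary) tree: every internal vertex has exactly three ordered
children, each of which is a leaf or an internal vertex. -/
inductive TernaryTree where
  | leaf : TernaryTree
  | node : TernaryTree → TernaryTree → TernaryTree → TernaryTree

/-- Number of internal vertices of a ternary tree. -/
def TernaryTree.isize : TernaryTree → ℕ
  | .leaf => 0
  | .node a b c => a.isize + b.isize + c.isize + 1

/-- The multiset of hook lengths of the internal vertices of a ternary tree
(the hook length of an internal vertex is the number of internal vertices in
the subtree rooted at it, including itself). -/
def TernaryTree.hooks : TernaryTree → Multiset ℕ
  | .leaf => 0
  | .node a b c => (TernaryTree.node a b c).isize ::ₘ (a.hooks + b.hooks + c.hooks)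

open Finset Nat Function

theorem Finset.sum_biUnion_antidiagonal_mul {α β R : Type*} [DecidableEq α] [DecidableEq β]
    [CommSemiring R] (s : ℕ → Finset α) (t : ℕ → Finset β) (hs : Pairwise (Disjoint on s))
    (f : α → R) (g : β → R) (n : ℕ) :
    ∑ x ∈ (antidiagonal n).biUnion (fun p => s p.1 ×ˢ t p.2), f x.1 * g x.2
      = ∑ p ∈ antidiagonal n, (∑ a ∈ s p.1, f a) * ∑ b ∈ t p.2, g b := by
  have hdisj : (antidiagonal n : Set (ℕ × ℕ)).PairwiseDisjoint fun p => s p.1 ×ˢ t p.2 := by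
    intro p hp q hq hpq
    refine disjoint_product.mpr (Or.inl (hs fun h => hpq ?_))
    have := (mem_antidiagonal.mp hp).trans (mem_antidiagonal.mp hq).symm
    exact Prod.ext h (by omega)
  rw [sum_biUnion hdisj]
  exact sum_congr rfl fun p _ => by rw [sum_product, sum_mul_sum]

/-- The Abel polynomials `x (x + n z)^(n-1)` divided by `n!`, so that Abel's binomial identity
becomes a convolution over the antidiagonal. -/
noncomputable def scaledAbel (z : ℝ) : ℕ → ℝ → ℝ
  | 0, _ => 1
  | n + 1, x => x * (x + (n + 1) * z) ^ n / (n + 1)!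

theorem scaledAbel_succ_zero (z : ℝ) (n : ℕ) : scaledAbel z (n + 1) 0 = 0 := by
  simp [scaledAbel]

theorem scaledAbel_hasDerivAt (z : ℝ) (n : ℕ) (x : ℝ) :
    HasDerivAt (scaledAbel z (n + 1)) (scaledAbel z n (x + z)) x := by
  have h := (((hasDerivAt_id' x).fun_mul
    (((hasDerivAt_id' x).add_const ((n + 1 : ℝ) * z)).fun_pow n)).div_const ((n + 1)! : ℝ))
  refine (h.congr_of_eventuallyEq (.of_forall fun y => rfl)).congr_deriv ?_
  cases n with
  | zero => simp [scaledAbel]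
  | succ m =>
    simp only [scaledAbel, Nat.cast_add, Nat.cast_one, factorial_succ (m + 1), Nat.cast_mul,
      add_tsub_cancel_right, pow_succ _ m]
    field_simp
    ring

theorem scaledAbel_add (z : ℝ) (n : ℕ) (x y : ℝ) :
    ∑ p ∈ antidiagonal n, scaledAbel z p.1 x * scaledAbel z p.2 y = scaledAbel z n (x + y) := by
  induction n generalizing x with
  | zero => simp [scaledAbel]
  | succ n ih =>
    let g x := scaledAbel z (n + 1) (x + y)
      - ∑ p ∈ antidiagonal n, scaledAbel z (p.1 + 1) x * scaledAbel z p.2 y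
    have hg : ∀ x, HasDerivAt g 0 x := fun x => by
      have h₁ := (scaledAbel_hasDerivAt z n (x + y)).comp x ((hasDerivAt_id' x).add_const y)
      have h₂ := HasDerivAt.fun_sum fun p (_ : p ∈ antidiagonal n) =>
        (scaledAbel_hasDerivAt z p.1 x).mul_const (scaledAbel z p.2 y)
      rw [ih, add_right_comm] at h₂
      rw [mul_one] at h₁
      have h := h₁.fun_sub h₂
      rwa [sub_self] at h
    have hg_const := is_const_of_deriv_eq_zero (fun x => (hg x).differentiableAt)
      (fun x => (hg x).deriv) x 0
    simp only [g, zero_add, scaledAbel_succ_zero, zero_mul, sum_const_zero, sub_zero] at hg_const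
    rw [Nat.sum_antidiagonal_succ, ← hg_const]
    simp [scaledAbel]

namespace TernaryTree

deriving instance DecidableEq for TernaryTree

def node₃ (t : TernaryTree × TernaryTree × TernaryTree) : TernaryTree := node t.1 t.2.1 t.2.2

theorem node₃_injective : Injective node₃ := by
  rintro ⟨a, b, c⟩ ⟨a', b', c'⟩ h
  obtain ⟨rfl, rfl, rfl⟩ := node.inj h
  rfl

def depthLE : ℕ → Finset TernaryTree
  | 0 => {leaf}
  | n + 1 => insert leaf ((depthLE n ×ˢ depthLE n ×ˢ depthLE n).image node₃)

theorem mem_depthLE_of_isize_le : ∀ {T : TernaryTree} {n : ℕ}, T.isize ≤ n → T ∈ depthLE n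
  | leaf, 0, _ => mem_singleton_self _
  | leaf, _ + 1, _ => mem_insert_self _ _
  | node a b c, n + 1, h => by
    simp only [isize] at h
    refine mem_insert_of_mem <| mem_image_of_mem node₃ (a := (a, b, c)) <|
      mem_product.mpr ⟨?_, mem_product.mpr ⟨?_, ?_⟩⟩
    all_goals exact mem_depthLE_of_isize_le (by dsimp only; omega)

def ofSize (n : ℕ) : Finset TernaryTree := (depthLE n).filter (·.isize = n)

theorem mem_ofSize {T : TernaryTree} {n : ℕ} : T ∈ ofSize n ↔ T.isize = n := by
  simpa [ofSize] using fun h => mem_depthLE_of_isize_le h.le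

theorem ofSize_zero : ofSize 0 = {leaf} := rfl

theorem pairwise_disjoint_ofSize : Pairwise (Disjoint on ofSize) := fun _ _ hij =>
  disjoint_left.mpr fun _ hi hj => hij ((mem_ofSize.mp hi).symm.trans (mem_ofSize.mp hj))

def pairsOfSize (n : ℕ) : Finset (TernaryTree × TernaryTree) :=
  (antidiagonal n).biUnion fun p => ofSize p.1 ×ˢ ofSize p.2

def triplesOfSize (n : ℕ) : Finset (TernaryTree × TernaryTree × TernaryTree) :=
  (antidiagonal n).biUnion fun p => ofSize p.1 ×ˢ pairsOfSize p.2

theorem mem_pairsOfSize {t : TernaryTree × TernaryTree} {n : ℕ} :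
    t ∈ pairsOfSize n ↔ t.1.isize + t.2.isize = n := by
  simp [pairsOfSize, mem_ofSize]

theorem mem_triplesOfSize {t : TernaryTree × TernaryTree × TernaryTree} {n : ℕ} :
    t ∈ triplesOfSize n ↔ t.1.isize + t.2.1.isize + t.2.2.isize = n := by
  simp [triplesOfSize, mem_ofSize, mem_pairsOfSize, add_assoc]

theorem ofSize_succ (n : ℕ) : ofSize (n + 1) = (triplesOfSize n).image node₃ := by
  ext (_ | ⟨a, b, c⟩)
  · simp [mem_ofSize, isize, node₃]
  · simp [mem_ofSize, mem_triplesOfSize, isize, node₃]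

noncomputable def hookFactor (h : ℕ) : ℝ := 2 / 3 + 1 / (3 * h)

theorem hookFactor_mul_scaledAbel (m : ℕ) :
    hookFactor (m + 1) * scaledAbel 2 m 3 = scaledAbel 2 (m + 1) 1 := by
  cases m with
  | zero => norm_num [hookFactor, scaledAbel]
  | succ k =>
    simp only [hookFactor, scaledAbel, factorial_succ (k + 1), Nat.cast_mul, Nat.cast_add,
      Nat.cast_one]
    field_simp
    ring

-- The theorem's own lambda, which maps over `T.hooks` coerced to `Multiset ℝ`; this keeps the
-- theorem's sum syntactically a sum of `hookWeight`s.
noncomputable def hookWeight (T : TernaryTree) : ℝ :=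
  (T.hooks.map fun h => (2 : ℝ) / 3 + 1 / (3 * h)).prod

theorem hookWeight_node (a b c : TernaryTree) :
    hookWeight (node a b c)
      = hookFactor (node a b c).isize * (hookWeight a * (hookWeight b * hookWeight c)) := by
  simp [hookWeight, hookFactor, hooks, mul_assoc]

noncomputable def hookSum (n : ℕ) : ℝ := ∑ T ∈ ofSize n, hookWeight T

theorem hookSum_succ (n : ℕ) :
    hookSum (n + 1) = hookFactor (n + 1) * ∑ p ∈ antidiagonal n,
      hookSum p.1 * ∑ q ∈ antidiagonal p.2, hookSum q.1 * hookSum q.2 := by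
  have hnode : ∀ t ∈ triplesOfSize n, hookWeight (node₃ t)
      = hookFactor (n + 1) * (hookWeight t.1 * (hookWeight t.2.1 * hookWeight t.2.2)) := by
    rintro ⟨a, b, c⟩ ht
    rw [node₃, hookWeight_node, isize, mem_triplesOfSize.mp ht]
  rw [hookSum, ofSize_succ, sum_image node₃_injective.injOn, sum_congr rfl hnode, ← mul_sum,
    triplesOfSize, sum_biUnion_antidiagonal_mul ofSize pairsOfSize
      pairwise_disjoint_ofSize hookWeight fun t => hookWeight t.1 * hookWeight t.2]
  simp only [pairsOfSize, sum_biUnion_antidiagonal_mul _ _ pairwise_disjoint_ofSize, hookSum]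

theorem hookSum_eq_scaledAbel (n : ℕ) : hookSum n = scaledAbel 2 n 1 := by
  induction n using Nat.strong_induction_on with
  | _ n ih =>
  cases n with
  | zero => simp [hookSum, ofSize_zero, hookWeight, hooks, scaledAbel]
  | succ m =>
    have hinner : ∀ p ∈ antidiagonal m,
        hookSum p.1 * ∑ q ∈ antidiagonal p.2, hookSum q.1 * hookSum q.2
          = scaledAbel 2 p.1 1 * scaledAbel 2 p.2 (1 + 1) := fun p hp => by
      have hp := mem_antidiagonal.mp hp
      rw [← scaledAbel_add, ih p.1 (by omega)]
      congr 1
      exact sum_congr rfl fun q hq => by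
        have hq := mem_antidiagonal.mp hq
        rw [ih q.1 (by omega), ih q.2 (by omega)]
    rw [hookSum_succ, sum_congr rfl hinner, scaledAbel_add, ← hookFactor_mul_scaledAbel]
    norm_num

end TernaryTree

theorem du_liu_ternary_general (n : ℕ) :
    ∑' T : {T : TernaryTree // T.isize = n},
      ((T.1.hooks).map (fun h => (2 : ℝ) / 3 + 1 / (3 * h))).prod
      = (2 * (n : ℝ) + 1) ^ (n - 1) / (Nat.factorial n : ℝ) := by
  have : Fintype {T : TernaryTree // T.isize = n} :=
    Fintype.subtype (TernaryTree.ofSize n) fun _ => TernaryTree.mem_ofSize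
  rw [tsum_fintype]
  calc _ = TernaryTree.hookSum n :=
        (Finset.sum_subtype _ (fun _ => TernaryTree.mem_ofSize) TernaryTree.hookWeight).symm
    _ = scaledAbel 2 n 1 := TernaryTree.hookSum_eq_scaledAbel n
    _ = _ := by
      cases n with
      | zero => simp [scaledAbel]
      | succ m =>
        rw [scaledAbel, add_tsub_cancel_right]
        push_cast
        ring

/-- Proposition 4 (Du–Liu): hook length formula for ternary trees. -/
theorem du_liu_ternary (n : ℕ) (hn : 1 ≤ n) :
    ∑' T : {T : TernaryTree // T.isize = n},
      ((T.1.hooks).map (fun h => (2 : ℝ) / 3 + 1 / (3 * h))).prod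
      = (2 * (n : ℝ) + 1) ^ (n - 1) / (Nat.factorial n : ℝ) :=
  du_liu_ternary_general n
end
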